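/- arXiv:1306.0439 — 2 statements merged into one kernel-verified Lean document; each statement's English description precedes it below -/
import Mathlib

section
/- (Lagrange identity on a finite interval.) Let (u,u1) be an l-pair with output f and (v,v1) an l⁺-pair with output g. Then for every finite interval [a,b]: ∫_a^b (f(x), v(x)) dx − ∫_a^b (u(x), g(x)) dx = [u,v](b) − [u,v](a), where [u,v](t) := (u(t), v1(t)) − (u1(t), v(t)). -/
open MeasureTheory Matrix Filter Topology

noncomputable section

abbrev Em (m : ℕ) := EuclideanSpace ℂ (Fin m)

/-- Matrix action on `ℂ^m`. -/
def mv (m : ℕ) (A : Matrix (Fin m) (Fin m) ℂ) (x : Em m) : Em m := WithLp.toLp 2 (A.mulVec x)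

/-- `(u,u1)` is an l-pair with output `f` for the Shin–Zettl data `(Q,s)`. -/
def IsLpair (m : ℕ) (Q s : ℝ → Matrix (Fin m) (Fin m) ℂ)
    (u u1 f : ℝ → Em m) : Prop :=
  LocallyIntegrable f volume ∧ Continuous u ∧ Continuous u1 ∧
  (∀ a x : ℝ, u x = u a + ∫ t in a..x, (mv m (Q t) (u t) + u1 t)) ∧
  (∀ a x : ℝ, u1 x = u1 a +
     ∫ t in a..x, (mv m (s t - Q t ^ 2) (u t) - mv m (Q t) (u1 t) - f t))

/-- `(v,v1)` is an l⁺-pair with output `g`: same with `Q,s` replaced by their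
conjugate transposes. -/
def IsLplusPair (m : ℕ) (Q s : ℝ → Matrix (Fin m) (Fin m) ℂ)
    (v v1 g : ℝ → Em m) : Prop :=
  IsLpair m (fun t => (Q t)ᴴ) (fun t => (s t)ᴴ) v v1 g

/-- `Q` is locally square-integrable (entrywise). -/
def LocL2 (m : ℕ) (Q : ℝ → Matrix (Fin m) (Fin m) ℂ) : Prop :=
  ∀ i j : Fin m, ∀ K : Set ℝ, IsCompact K →
    MemLp (fun x => Q x i j) 2 (volume.restrict K)

/-- `s` is locally integrable (entrywise). -/
def LocL1 (m : ℕ) (s : ℝ → Matrix (Fin m) (Fin m) ℂ) : Prop :=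
  ∀ i j : Fin m, LocallyIntegrable (fun x => s x i j) volume

/-- The `ℂ^m` inner product `(a,b) = ∑ i, aᵢ * conj bᵢ`. -/
def dotc (m : ℕ) (a b : Em m) : ℂ := ∑ i, a i * (starRingEnd ℂ) (b i)

/-- `⟨u,v⟩ = ∫ (u(x), v(x)) dx`. -/
def pairing (m : ℕ) (u v : ℝ → Em m) : ℂ := ∫ x : ℝ, dotc m (u x) (v x)

abbrev L2m (m : ℕ) := Lp (Em m) 2 (volume : Measure ℝ)

/-- The maximal graph `G`. -/
def Gmax (m : ℕ) (Q s : ℝ → Matrix (Fin m) (Fin m) ℂ) : Set (L2m m × L2m m) :=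
  {p | ∃ u u1 f : ℝ → Em m, IsLpair m Q s u u1 f ∧
        u =ᵐ[volume] p.1 ∧ f =ᵐ[volume] p.2}

/-- The preminimal graph `G₀₀`. -/
def G00 (m : ℕ) (Q s : ℝ → Matrix (Fin m) (Fin m) ℂ) : Set (L2m m × L2m m) :=
  {p | ∃ u u1 f : ℝ → Em m, IsLpair m Q s u u1 f ∧ HasCompactSupport u ∧
        u =ᵐ[volume] p.1 ∧ f =ᵐ[volume] p.2}

/-- The maximal graph `G⁺`. -/
def GmaxPlus (m : ℕ) (Q s : ℝ → Matrix (Fin m) (Fin m) ℂ) : Set (L2m m × L2m m) :=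
  {p | ∃ v v1 g : ℝ → Em m, IsLplusPair m Q s v v1 g ∧
        v =ᵐ[volume] p.1 ∧ g =ᵐ[volume] p.2}

/-- The preminimal graph `G₀₀⁺`. -/
def G00Plus (m : ℕ) (Q s : ℝ → Matrix (Fin m) (Fin m) ℂ) : Set (L2m m × L2m m) :=
  {p | ∃ v v1 g : ℝ → Em m, IsLplusPair m Q s v v1 g ∧ HasCompactSupport v ∧
        v =ᵐ[volume] p.1 ∧ g =ᵐ[volume] p.2}

/-!
Write `(x, y) = ⟪y, x⟫_ℂ`. The identity is integration by parts done twice. If `U` and `W` are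
primitives of integrable functions `P` and `R`, then `⟪U, W⟫ - ∫ₐ (⟪P, W⟫ + ⟪U, R⟫)` is absolutely
continuous and, by Lebesgue differentiation, has derivative zero almost everywhere, so it is
constant. Apply this to the pairs `(v1, u)` and `(v, u1)`. The two integrands then differ pointwise
by `(f, v) - (u, g)`, because every term involving `Q` or `s` cancels by `(A x, y) = (x, Aᴴ y)`.
-/

open Set intervalIntegral
open scoped InnerProductSpace

theorem MeasureTheory.LocallyIntegrable.intervalIntegrable {E : Type*} [NormedAddCommGroup E]
    {f : ℝ → E} (hf : LocallyIntegrable f volume) (a b : ℝ) :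
    IntervalIntegrable f volume a b :=
  intervalIntegrable_iff.2 <| (hf.integrableOn_isCompact isCompact_uIcc).mono_set uIoc_subset_uIcc

theorem IntervalIntegrable.absolutelyContinuousOnInterval_primitive {E : Type*}
    [NormedAddCommGroup E] [NormedSpace ℝ E] {f : ℝ → E} {a b c : ℝ}
    (hf : IntervalIntegrable f volume a b) (hc : c ∈ uIcc a b) :
    AbsolutelyContinuousOnInterval (fun x => ∫ t in c..x, f t) a b := by
  have hnorm := hf.norm.absolutelyContinuousOnInterval_intervalIntegral hc
  refine squeeze_zero' (Eventually.of_forall fun _ => Finset.sum_nonneg fun _ _ => dist_nonneg)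
    ?_ hnorm
  rw [eventually_inf_principal]
  filter_upwards with I hI
  gcongr with i hi
  have hint : ∀ y ∈ uIcc a b, IntervalIntegrable f volume c y := fun y hy =>
    hf.mono_set (uIcc_subset_uIcc hc hy)
  obtain ⟨h1, h2⟩ := hI.1 i hi
  rw [dist_eq_norm, dist_eq_norm, integral_interval_sub_left (hint _ h1) (hint _ h2),
    integral_interval_sub_left (hint _ h1).norm (hint _ h2).norm, Real.norm_eq_abs]
  exact norm_integral_le_abs_integral_norm

section Inner

variable {𝕜 E : Type*} [RCLike 𝕜] [NormedAddCommGroup E] [InnerProductSpace 𝕜 E] {a b : ℝ}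

theorem AbsolutelyContinuousOnInterval.inner {f g : ℝ → E}
    (hf : AbsolutelyContinuousOnInterval f a b) (hg : AbsolutelyContinuousOnInterval g a b) :
    AbsolutelyContinuousOnInterval (fun x => ⟪f x, g x⟫_𝕜) a b := by
  obtain ⟨C, hC⟩ := hf.exists_bound
  obtain ⟨D, hD⟩ := hg.exists_bound
  unfold AbsolutelyContinuousOnInterval at hf hg ⊢
  refine squeeze_zero' (Eventually.of_forall fun _ => Finset.sum_nonneg fun _ _ => dist_nonneg)
    ?_ (by simpa using (hg.const_mul C).add (hf.const_mul D))
  rw [eventually_inf_principal]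
  filter_upwards with I hI
  simp only [Finset.mul_sum, ← Finset.sum_add_distrib]
  gcongr with i hi
  obtain ⟨h1, h2⟩ := hI.1 i hi
  calc dist ⟪f (I.2 i).1, g (I.2 i).1⟫_𝕜 ⟪f (I.2 i).2, g (I.2 i).2⟫_𝕜
      = ‖⟪f (I.2 i).1, g (I.2 i).1 - g (I.2 i).2⟫_𝕜
          + ⟪f (I.2 i).1 - f (I.2 i).2, g (I.2 i).2⟫_𝕜‖ := by
        rw [dist_eq_norm, inner_sub_left, inner_sub_right]; ring_nf
    _ ≤ C * dist (g (I.2 i).1) (g (I.2 i).2) + D * dist (f (I.2 i).1) (f (I.2 i).2) := by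
        rw [dist_eq_norm, dist_eq_norm]
        refine (norm_add_le _ _).trans (add_le_add ?_ ?_)
        · exact (norm_inner_le_norm _ _).trans (by gcongr; exact hC _ h1)
        · exact (norm_inner_le_norm _ _).trans (by rw [mul_comm]; gcongr; exact hD _ h2)

theorem IntervalIntegrable.inner_continuousOn {f g : ℝ → E}
    (hf : IntervalIntegrable f volume a b) (hg : ContinuousOn g (uIcc a b)) :
    IntervalIntegrable (fun x => ⟪f x, g x⟫_𝕜) volume a b := by
  obtain ⟨C, hC⟩ := isCompact_uIcc.exists_bound_of_continuousOn hg
  refine (hf.norm.const_mul C).mono_fun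
    (hf.def'.aestronglyMeasurable.inner
      ((hg.aestronglyMeasurable measurableSet_uIcc).mono_set uIoc_subset_uIcc)) ?_
  filter_upwards [ae_restrict_mem measurableSet_uIoc] with x hx
  rw [norm_mul, norm_norm, Real.norm_eq_abs, mul_comm]
  exact (norm_inner_le_norm _ _).trans
    (by gcongr; exact (hC x (uIoc_subset_uIcc hx)).trans (le_abs_self C))

theorem IntervalIntegrable.continuousOn_inner {f g : ℝ → E}
    (hf : IntervalIntegrable f volume a b) (hg : ContinuousOn g (uIcc a b)) :
    IntervalIntegrable (fun x => ⟪g x, f x⟫_𝕜) volume a b :=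
  (hf.inner_continuousOn hg).mono_fun
    (((hg.aestronglyMeasurable measurableSet_uIcc).mono_set uIoc_subset_uIcc).inner
      hf.def'.aestronglyMeasurable)
    (Eventually.of_forall fun x => (norm_inner_symm (g x) (f x)).le)

theorem integral_inner_add_inner_eq_sub [NormedSpace ℝ E] [CompleteSpace E]
    {U W P R : ℝ → E}
    (hP : IntervalIntegrable P volume a b) (hR : IntervalIntegrable R volume a b)
    (hU : ∀ x ∈ uIcc a b, U x = U a + ∫ t in a..x, P t)
    (hW : ∀ x ∈ uIcc a b, W x = W a + ∫ t in a..x, R t) :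
    ∫ x in a..b, (⟪P x, W x⟫_𝕜 + ⟪U x, R x⟫_𝕜) = ⟪U b, W b⟫_𝕜 - ⟪U a, W a⟫_𝕜 := by
  set Φ : ℝ → E := fun x => U a + ∫ t in a..x, P t
  set Ψ : ℝ → E := fun x => W a + ∫ t in a..x, R t
  have hΦ : AbsolutelyContinuousOnInterval Φ a b :=
    (LipschitzWith.const (U a)).lipschitzOnWith.absolutelyContinuousOnInterval.fun_add
      (hP.absolutelyContinuousOnInterval_primitive left_mem_uIcc)
  have hΨ : AbsolutelyContinuousOnInterval Ψ a b :=
    (LipschitzWith.const (W a)).lipschitzOnWith.absolutelyContinuousOnInterval.fun_add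
      (hR.absolutelyContinuousOnInterval_primitive left_mem_uIcc)
  have hI : IntervalIntegrable (fun x => ⟪P x, Ψ x⟫_𝕜 + ⟪Φ x, R x⟫_𝕜) volume a b :=
    (hP.inner_continuousOn hΨ.continuousOn).add (hR.continuousOn_inner hΦ.continuousOn)
  obtain ⟨C, hC⟩ : ∃ C, ∀ x ∈ uIcc a b,
      ⟪Φ x, Ψ x⟫_𝕜 - ∫ t in a..x, (⟪P t, Ψ t⟫_𝕜 + ⟪Φ t, R t⟫_𝕜) = C := by
    refine ((hΦ.inner (𝕜 := 𝕜) hΨ).fun_sub (hI.absolutelyContinuousOnInterval_primitive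
      left_mem_uIcc)).const_of_ae_hasDerivAt_zero ?_
    filter_upwards [hP.ae_hasDerivAt_integral, hR.ae_hasDerivAt_integral,
      hI.ae_hasDerivAt_integral] with x hPx hRx hIx hx
    exact (((hPx hx a left_mem_uIcc).const_add (U a)).inner 𝕜
      ((hRx hx a left_mem_uIcc).const_add (W a))).sub (hIx hx a left_mem_uIcc)
      |>.congr_deriv (by ring)
  simp only [Φ, Ψ] at hC
  have ha := hC a left_mem_uIcc
  simp only [integral_same, add_zero, sub_zero] at ha
  rw [integral_congr fun x hx => by rw [hU x hx, hW x hx], hU b right_mem_uIcc,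
    hW b right_mem_uIcc]
  linear_combination ha - hC b right_mem_uIcc

end Inner

section Matrix

variable {m : ℕ}

theorem dotc_eq_inner (x y : Em m) : dotc m x y = ⟪y, x⟫_ℂ := by
  simp [dotc, PiLp.inner_apply]

theorem mv_sub (A B : Matrix (Fin m) (Fin m) ℂ) (x : Em m) :
    mv m (A - B) x = mv m A x - mv m B x := by
  ext i; simp [mv, Matrix.sub_mulVec]

theorem inner_mv_conjTranspose (A : Matrix (Fin m) (Fin m) ℂ) (x y : Em m) :
    ⟪mv m Aᴴ x, y⟫_ℂ = ⟪x, mv m A y⟫_ℂ := by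
  have := LinearMap.adjoint_inner_left (Matrix.toEuclideanLin A) y x
  rwa [← Matrix.toEuclideanLin_conjTranspose_eq_adjoint] at this

theorem LocL2.locL1 {Q : ℝ → Matrix (Fin m) (Fin m) ℂ} (hQ : LocL2 m Q) : LocL1 m Q :=
  fun i j => locallyIntegrable_iff.2 fun K hK =>
    haveI := isFiniteMeasure_restrict.2 (hK.measure_lt_top (μ := volume)).ne
    (hQ i j K hK).integrable one_le_two

theorem LocL2.locL1_sq {Q : ℝ → Matrix (Fin m) (Fin m) ℂ} (hQ : LocL2 m Q) :
    LocL1 m fun x => Q x ^ 2 := by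
  intro i j
  simp only [sq, Matrix.mul_apply]
  refine locallyIntegrable_iff.2 fun K hK => integrable_finsetSum _ fun k _ => ?_
  exact (hQ i k K hK).integrable_mul (hQ k j K hK)

theorem LocL1.sub {M N : ℝ → Matrix (Fin m) (Fin m) ℂ} (hM : LocL1 m M) (hN : LocL1 m N) :
    LocL1 m fun x => M x - N x :=
  fun i j => (hM i j).sub (hN i j)

theorem LocL1.conjTranspose {M : ℝ → Matrix (Fin m) (Fin m) ℂ} (hM : LocL1 m M) :
    LocL1 m fun x => (M x)ᴴ :=
  fun i j => locallyIntegrable_iff.2 fun _ hK => memLp_one_iff_integrable.1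
    (memLp_one_iff_integrable.2 ((hM j i).integrableOn_isCompact hK)).star

theorem LocL1.intervalIntegrable_mv {M : ℝ → Matrix (Fin m) (Fin m) ℂ} {w : ℝ → Em m}
    (hM : LocL1 m M) (hw : Continuous w) (a b : ℝ) :
    IntervalIntegrable (fun t => mv m (M t) (w t)) volume a b := by
  simp only [intervalIntegrable_iff, IntegrableOn, integrable_piLp_iff]
  intro i
  simp only [mv, Matrix.mulVec, dotProduct]
  refine integrable_finsetSum _ fun j _ => ?_
  exact ((hM i j).intervalIntegrable a b).mul_continuousOn
    ((continuous_apply j).comp (PiLp.continuous_ofLp 2 _ |>.comp hw)).continuousOn |>.def'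

theorem IsLpair.intervalIntegrable {Q s : ℝ → Matrix (Fin m) (Fin m) ℂ} {u u1 f : ℝ → Em m}
    (hQ : LocL1 m Q) (hsQ : LocL1 m fun x => s x - Q x ^ 2) (hu : IsLpair m Q s u u1 f)
    (a b : ℝ) :
    IntervalIntegrable (fun t => mv m (Q t) (u t) + u1 t) volume a b ∧
      IntervalIntegrable (fun t => mv m (s t - Q t ^ 2) (u t) - mv m (Q t) (u1 t) - f t)
        volume a b := by
  obtain ⟨hf, hu, hu1, -, -⟩ := hu
  exact ⟨(hQ.intervalIntegrable_mv hu a b).add (hu1.intervalIntegrable a b),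
    ((hsQ.intervalIntegrable_mv hu a b).sub (hQ.intervalIntegrable_mv hu1 a b)).sub
      (hf.intervalIntegrable a b)⟩

theorem lagrange_integrand_identity (Q s : Matrix (Fin m) (Fin m) ℂ) (u u1 f v v1 g : Em m) :
    (⟪mv m (sᴴ - Qᴴ ^ 2) v - mv m Qᴴ v1 - g, u⟫_ℂ + ⟪v1, mv m Q u + u1⟫_ℂ)
      - (⟪mv m Qᴴ v + v1, u1⟫_ℂ + ⟪v, mv m (s - Q ^ 2) u - mv m Q u1 - f⟫_ℂ)
      = ⟪v, f⟫_ℂ - ⟪g, u⟫_ℂ := by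
  rw [← Matrix.conjTranspose_pow, ← Matrix.conjTranspose_sub]
  simp only [mv_sub, inner_add_left, inner_sub_left, inner_add_right, inner_sub_right,
    inner_mv_conjTranspose]
  ring

end Matrix

theorem stmt4_general (m : ℕ) (Q s : ℝ → Matrix (Fin m) (Fin m) ℂ)
    (hQ : LocL2 m Q) (hs : LocL1 m s)
    (u u1 f v v1 g : ℝ → Em m)
    (hu : IsLpair m Q s u u1 f) (hv : IsLplusPair m Q s v v1 g) :
    ∀ a b : ℝ, a ≤ b →
      (∫ x in a..b, dotc m (f x) (v x)) - (∫ x in a..b, dotc m (u x) (g x)) =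
        (dotc m (u b) (v1 b) - dotc m (u1 b) (v b)) -
          (dotc m (u a) (v1 a) - dotc m (u1 a) (v a)) := by
  intro a b _
  have hsQ : LocL1 m fun x => s x - Q x ^ 2 := hs.sub hQ.locL1_sq
  obtain ⟨hP, hP1⟩ := hu.intervalIntegrable hQ.locL1 hsQ a b
  obtain ⟨hR, hR1⟩ := IsLpair.intervalIntegrable hQ.locL1.conjTranspose
    (by simpa only [Matrix.conjTranspose_sub, Matrix.conjTranspose_pow] using hsQ.conjTranspose)
    hv a b
  obtain ⟨hf, hu_cont, hu1_cont, hU, hU1⟩ := hu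
  obtain ⟨hg, hv_cont, hv1_cont, hV, hV1⟩ := hv
  have h_uv1 := integral_inner_add_inner_eq_sub (𝕜 := ℂ) hR1 hP
    (fun x _ => hV1 a x) (fun x _ => hU a x)
  have h_u1v := integral_inner_add_inner_eq_sub (𝕜 := ℂ) hR hP1
    (fun x _ => hV a x) (fun x _ => hU1 a x)
  simp only [dotc_eq_inner]
  rw [← integral_sub ((hf.intervalIntegrable a b).continuousOn_inner hv_cont.continuousOn)
      ((hg.intervalIntegrable a b).inner_continuousOn hu_cont.continuousOn),
    integral_congr fun x _ =>
      (lagrange_integrand_identity (Q x) (s x) (u x) (u1 x) (f x) (v x) (v1 x) (g x)).symm,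
    integral_sub ((hR1.inner_continuousOn hu_cont.continuousOn).add
        (hP.continuousOn_inner hv1_cont.continuousOn))
      ((hR.inner_continuousOn hu1_cont.continuousOn).add
        (hP1.continuousOn_inner hv_cont.continuousOn)),
    h_uv1, h_u1v]
  ring

/-- Lagrange identity on a finite interval. -/
theorem stmt4 (m : ℕ) (hm : 1 ≤ m) (Q s : ℝ → Matrix (Fin m) (Fin m) ℂ)
    (hQ : LocL2 m Q) (hs : LocL1 m s)
    (u u1 f v v1 g : ℝ → Em m)
    (hu : IsLpair m Q s u u1 f) (hv : IsLplusPair m Q s v v1 g) :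
    ∀ a b : ℝ, a ≤ b →
      (∫ x in a..b, dotc m (f x) (v x)) - (∫ x in a..b, dotc m (u x) (g x)) =
        (dotc m (u b) (v1 b) - dotc m (u1 b) (v b)) -
          (dotc m (u a) (v1 a) - dotc m (u1 a) (v a)) :=
  stmt4_general m Q s hQ hs u u1 f v v1 g hu hv
end
end

section
/- (Product rule with a smooth cutoff.) Let (u,u1) be an l-pair with output f and let φ : ℝ → ℂ be smooth with compact support. Then the pair (φ·u, φ'·u + φ·u1) is an l-pair with output φ·f − φ''·u − 2φ'·u', where u'(x) := Q(x)·u(x) + u1(x); moreover φ·u has compact support. The analogous statement holds for l⁺-pairs: if (v,v1) is an l⁺-pair with output g, then (φ·v, φ'·v + φ·v1) is an l⁺-pair with output φ·g − φ''·v − 2φ'·v', where v'(x) := Q(x)*·v(x) + v1(x). -/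
open MeasureTheory Matrix Filter Topology

noncomputable section

section Helpers

open Set

lemma coord_norm_le (m : ℕ) (x : Em m) (j : Fin m) : ‖x j‖ ≤ ‖x‖ := by
  rw [EuclideanSpace.norm_eq]
  rw [show ‖x j‖ = Real.sqrt (‖x j‖ ^ 2) from (Real.sqrt_sq (norm_nonneg _)).symm]
  exact Real.sqrt_le_sqrt
    (Finset.single_le_sum (f := fun i => ‖x i‖ ^ 2) (fun i _ => sq_nonneg _) (Finset.mem_univ j))

lemma em_sum_apply (m : ℕ) (g : Fin m → Em m) (k : Fin m) :
    (∑ i, g i) k = ∑ i, g i k :=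
  map_sum (PiLp.projₗ (𝕜 := ℂ) 2 (fun _ : Fin m => ℂ) k) g Finset.univ

lemma mv_eq_sum (m : ℕ) (A : Matrix (Fin m) (Fin m) ℂ) (x : Em m) :
    mv m A x = ∑ i, ∑ j, (A i j * x j) • (EuclideanSpace.single i (1:ℂ)) := by
  ext k
  simp only [mv, Matrix.mulVec, dotProduct]
  rw [em_sum_apply]
  rw [Finset.sum_congr rfl (fun i _ => em_sum_apply m _ k)]
  rw [Finset.sum_comm]
  simp [EuclideanSpace.single_apply, mul_ite]

lemma mv_smul (m : ℕ) (A : Matrix (Fin m) (Fin m) ℂ) (z : ℂ) (x : Em m) :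
    mv m A (z • x) = z • mv m A x := by
  ext k
  simp [mv, Matrix.mulVec, dotProduct, PiLp.smul_apply, smul_eq_mul, Finset.mul_sum,
    mul_left_comm]

lemma mv_addv (m : ℕ) (A : Matrix (Fin m) (Fin m) ℂ) (x y : Em m) :
    mv m A (x + y) = mv m A x + mv m A y := by
  ext k
  simp [mv, Matrix.mulVec, dotProduct, PiLp.add_apply, mul_add, Finset.sum_add_distrib]

lemma integrableOn_smul_cont {K : Set ℝ} (hK : IsCompact K) {ψ : ℝ → ℂ} (hψ : Continuous ψ)
    {m : ℕ} {w : ℝ → Em m} (hw : MeasureTheory.IntegrableOn w K MeasureTheory.volume) :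
    MeasureTheory.IntegrableOn (fun t => ψ t • w t) K MeasureTheory.volume := by
  obtain ⟨C, hC⟩ := hK.exists_bound_of_continuousOn hψ.continuousOn
  refine MeasureTheory.Integrable.mono' (hw.norm.const_mul C)
    (hψ.aestronglyMeasurable.restrict.smul hw.aestronglyMeasurable) ?_
  refine (MeasureTheory.ae_restrict_iff' hK.measurableSet).2
    (Filter.Eventually.of_forall fun t ht => ?_)
  rw [norm_smul]
  exact mul_le_mul_of_nonneg_right (hC t ht) (norm_nonneg _)

lemma locallyIntegrable_smul_cont {ψ : ℝ → ℂ} (hψ : Continuous ψ)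
    {m : ℕ} {w : ℝ → Em m} (hw : MeasureTheory.LocallyIntegrable w MeasureTheory.volume) :
    MeasureTheory.LocallyIntegrable (fun t => ψ t • w t) MeasureTheory.volume :=
  MeasureTheory.locallyIntegrable_iff.2 fun K hK =>
    integrableOn_smul_cont hK hψ (hw.integrableOn_isCompact hK)

lemma integrableOn_mv {m : ℕ} {M : ℝ → Matrix (Fin m) (Fin m) ℂ} {K : Set ℝ} (hK : IsCompact K)
    (hM : ∀ i j, MeasureTheory.IntegrableOn (fun t => M t i j) K MeasureTheory.volume)
    {c : ℝ → Em m} (hc : Continuous c) :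
    MeasureTheory.IntegrableOn (fun t => mv m (M t) (c t)) K MeasureTheory.volume := by
  have he : (fun t => mv m (M t) (c t))
      = fun t => ∑ i, ∑ j, (c t j * M t i j) • (EuclideanSpace.single i (1:ℂ)) := by
    funext t; rw [mv_eq_sum]; simp [mul_comm]
  rw [he]
  refine MeasureTheory.integrable_finset_sum _ fun i _ =>
    MeasureTheory.integrable_finset_sum _ fun j _ => ?_
  apply MeasureTheory.Integrable.smul_const
  obtain ⟨C, hC⟩ := hK.exists_bound_of_continuousOn hc.continuousOn
  refine MeasureTheory.Integrable.bdd_mul (c := C) (hM i j)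
    (((EuclideanSpace.proj j).continuous.comp hc).aestronglyMeasurable.restrict) ?_
  refine (MeasureTheory.ae_restrict_iff' hK.measurableSet).2
    (Filter.Eventually.of_forall fun t ht => ?_)
  exact le_trans (coord_norm_le m (c t) j) (hC t ht)

lemma locInt_intervalIntegrable {m : ℕ} {w : ℝ → Em m}
    (hw : MeasureTheory.LocallyIntegrable w MeasureTheory.volume) (p q : ℝ) :
    IntervalIntegrable w MeasureTheory.volume p q := by
  rw [intervalIntegrable_iff]
  exact (hw.integrableOn_isCompact isCompact_uIcc).mono_set uIoc_subset_uIcc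

end Helpers

section PartsSection
open Set

lemma parts_core {m : ℕ} {φ : ℝ → ℂ} (hφcont : Continuous φ) (hφ' : Continuous (deriv φ))
    (hd : ∀ y, HasDerivAt φ (deriv φ y) y)
    {w : ℝ → Em m} (hw : LocallyIntegrable w volume)
    {a x : ℝ} (hax : a ≤ x) :
    ∫ t in a..x, deriv φ t • (∫ τ in a..t, w τ)
      = φ x • (∫ τ in a..x, w τ) - ∫ t in a..x, φ t • w t := by
  set ν := volume.restrict (Ioc a x) with hν
  haveI : IsFiniteMeasure ν := by
    constructor
    rw [Measure.restrict_apply_univ]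
    simp [Real.volume_Ioc]
  have hCw : IntegrableOn w (Ioc a x) volume :=
    (hw.integrableOn_isCompact isCompact_Icc).mono_set Ioc_subset_Icc_self
  obtain ⟨C, hC⟩ := (isCompact_Icc (a := a) (b := x)).exists_bound_of_continuousOn
    hφ'.continuousOn
  set S : Set (ℝ × ℝ) := {p | a < p.2 ∧ p.2 ≤ p.1} with hS
  have hSm : MeasurableSet S :=
    (measurableSet_lt measurable_const measurable_snd).inter
      (measurableSet_le measurable_snd measurable_fst)
  have hsnd : AEStronglyMeasurable (fun p : ℝ × ℝ => w p.2) (ν.prod ν) :=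
    hCw.aestronglyMeasurable.comp_snd
  have hH : Integrable
      (fun p : ℝ × ℝ => deriv φ p.1 • S.indicator (fun q : ℝ × ℝ => w q.2) p) (ν.prod ν) := by
    refine Integrable.mono' ((integrable_const C).mul_prod hCw.norm)
      (((hφ'.comp continuous_fst).aestronglyMeasurable).smul (hsnd.indicator hSm)) ?_
    have hmem : ∀ᵐ p ∂(ν.prod ν), p ∈ (Ioc a x) ×ˢ (Ioc a x) := by
      rw [hν, Measure.prod_restrict]
      exact ae_restrict_mem (measurableSet_Ioc.prod measurableSet_Ioc)
    filter_upwards [hmem] with p hp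
    rw [norm_smul]
    refine mul_le_mul (hC p.1 (Ioc_subset_Icc_self hp.1)) ?_ (norm_nonneg _)
      (le_trans (norm_nonneg _) (hC p.1 (Ioc_subset_Icc_self hp.1)))
    exact norm_indicator_le_norm_self _ _
  have hindeq : ∀ t ∈ Ioc a x,
      (fun τ => S.indicator (fun q : ℝ × ℝ => w q.2) (t, τ)) = (Ioc a t).indicator w := by
    intro t _
    funext τ
    by_cases h : a < τ ∧ τ ≤ t <;> simp [hS, Set.indicator, Set.mem_Ioc, h]
  calc ∫ t in a..x, deriv φ t • (∫ τ in a..t, w τ)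
      = ∫ t in Ioc a x, deriv φ t • (∫ τ in a..t, w τ) := intervalIntegral.integral_of_le hax
    _ = ∫ t, ∫ τ, deriv φ t • S.indicator (fun q : ℝ × ℝ => w q.2) (t, τ) ∂ν ∂ν := by
        refine setIntegral_congr_fun measurableSet_Ioc fun t ht => ?_
        rw [integral_smul]
        congr 1
        rw [intervalIntegral.integral_of_le ht.1.le]
        rw [show (∫ τ in Ioc a t, w τ) = ∫ τ in Ioc a x, (Ioc a t).indicator w τ by
          rw [setIntegral_indicator measurableSet_Ioc,
            Set.inter_eq_right.mpr (Set.Ioc_subset_Ioc_right ht.2)]]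
        rw [hindeq t ht]
    _ = ∫ τ, ∫ t, deriv φ t • S.indicator (fun q : ℝ × ℝ => w q.2) (t, τ) ∂ν ∂ν :=
        integral_integral_swap hH
    _ = ∫ τ in Ioc a x, (φ x - φ τ) • w τ := by
        refine setIntegral_congr_fun measurableSet_Ioc fun τ hτ => ?_
        have h1 : ∀ t, deriv φ t • S.indicator (fun q : ℝ × ℝ => w q.2) (t, τ)
            = (Ici τ).indicator (fun t => deriv φ t • w τ) t := by
          intro t
          by_cases h : τ ≤ t <;> simp [hS, Set.indicator, hτ.1, h]
        simp only [h1]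
        rw [integral_indicator measurableSet_Ici, hν,
          Measure.restrict_restrict measurableSet_Ici,
          show Ici τ ∩ Ioc a x = Icc τ x by
            ext t
            simp only [Set.mem_inter_iff, Set.mem_Ici, Set.mem_Ioc, Set.mem_Icc]
            exact ⟨fun h => ⟨h.1, h.2.2⟩, fun h => ⟨h.1, lt_of_lt_of_le hτ.1 h.1, h.2⟩⟩,
          integral_Icc_eq_integral_Ioc, ← intervalIntegral.integral_of_le hτ.2,
          intervalIntegral.integral_smul_const,
          intervalIntegral.integral_deriv_eq_sub (fun y _ => (hd y).differentiableAt)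
            (hφ'.intervalIntegrable _ _)]
    _ = φ x • (∫ τ in a..x, w τ) - ∫ t in a..x, φ t • w t := by
        have hint2 : IntegrableOn (fun τ => φ τ • w τ) (Ioc a x) volume := by
          obtain ⟨D, hD⟩ := (isCompact_Icc (a := a) (b := x)).exists_bound_of_continuousOn
            hφcont.continuousOn
          refine Integrable.mono' (hCw.norm.const_mul D)
            (hφcont.aestronglyMeasurable.restrict.smul hCw.aestronglyMeasurable) ?_
          refine (ae_restrict_iff' measurableSet_Ioc).2
            (Filter.Eventually.of_forall fun t ht => ?_)
          rw [norm_smul]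
          exact mul_le_mul_of_nonneg_right (hD t (Ioc_subset_Icc_self ht)) (norm_nonneg _)
        have hint1 : Integrable (fun τ => φ x • w τ) ν := hCw.smul (φ x)
        simp only [sub_smul]
        rw [integral_sub hint1 hint2, integral_smul,
          intervalIntegral.integral_of_le hax, intervalIntegral.integral_of_le hax]

lemma parts {m : ℕ} {φ : ℝ → ℂ} (hφcont : Continuous φ) (hφ' : Continuous (deriv φ))
    (hd : ∀ y, HasDerivAt φ (deriv φ y) y)
    {c w : ℝ → Em m} (hc : Continuous c) (hw : LocallyIntegrable w volume)
    (hcw : ∀ a x : ℝ, c x = c a + ∫ t in a..x, w t) (a x : ℝ) :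
    φ x • c x = φ a • c a + ∫ t in a..x, (deriv φ t • c t + φ t • w t) := by
  have hφw : ∀ p q : ℝ, IntervalIntegrable (fun t => φ t • w t) volume p q :=
    fun p q => locInt_intervalIntegrable (locallyIntegrable_smul_cont hφcont hw) p q
  have key : ∀ p q : ℝ, p ≤ q →
      φ q • c q = φ p • c p + ∫ t in p..q, (deriv φ t • c t + φ t • w t) := by
    intro p q hpq
    have hGdef : ∀ t, c t - c p = ∫ τ in p..t, w τ := fun t => by rw [hcw p t]; abel
    have h1 : IntervalIntegrable (fun t => deriv φ t • c t) volume p q :=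
      (hφ'.smul hc).intervalIntegrable p q
    rw [intervalIntegral.integral_add h1 (hφw p q)]
    have h2 : (fun t => deriv φ t • c t)
        = fun t => deriv φ t • c p + deriv φ t • (c t - c p) := by
      funext t; rw [← smul_add]; congr 1; abel
    rw [h2, intervalIntegral.integral_add (f := fun t => deriv φ t • c p) (g := fun t => deriv φ t • (c t - c p)) ((hφ'.smul continuous_const).intervalIntegrable p q)
      ((hφ'.smul (hc.sub continuous_const)).intervalIntegrable p q),
      intervalIntegral.integral_smul_const,
      intervalIntegral.integral_deriv_eq_sub (fun y _ => (hd y).differentiableAt)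
        (hφ'.intervalIntegrable p q)]
    have h3 : ∫ t in p..q, deriv φ t • (c t - c p)
        = ∫ t in p..q, deriv φ t • (∫ τ in p..t, w τ) := by simp only [hGdef]
    rw [h3, parts_core hφcont hφ' hd hw hpq, ← hGdef q]
    simp only [sub_smul, smul_sub]
    abel
  rcases le_total a x with h | h
  · exact key a x h
  · have hxa := key x a h
    rw [intervalIntegral.integral_symm x a, hxa]
    abel

end PartsSection

section KeySection
open Set

lemma mem_one_of_memtwo {K : Set ℝ} (hK : IsCompact K) {h : ℝ → ℂ}
    (hh : MemLp h 2 (volume.restrict K)) : Integrable h (volume.restrict K) := by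
  haveI : IsFiniteMeasure (volume.restrict K) :=
    ⟨by rw [Measure.restrict_apply_univ]; exact hK.measure_lt_top⟩
  exact hh.integrable one_le_two

lemma key_lpair (m : ℕ) (Q s : ℝ → Matrix (Fin m) (Fin m) ℂ)
    (hQ : LocL2 m Q) (hs : LocL1 m s)
    (φ : ℝ → ℂ) (hφ : ContDiff ℝ (⊤ : ℕ∞) φ)
    (u u1 f : ℝ → Em m) (hpair : IsLpair m Q s u u1 f) :
    IsLpair m Q s (fun x => φ x • u x)
      (fun x => deriv φ x • u x + φ x • u1 x)
      (fun x => φ x • f x - deriv (deriv φ) x • u x -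
        (2 * deriv φ x) • (mv m (Q x) (u x) + u1 x)) := by
  obtain ⟨hf, hu, hu1, heq1, heq2⟩ := hpair
  have hphiT : ContDiff ℝ ((⊤ : ℕ∞) : WithTop ℕ∞) φ := hφ.of_le (by simp)
  have hφcont : Continuous φ := hφ.continuous
  have hφder : ContDiff ℝ ((⊤ : ℕ∞) : WithTop ℕ∞) (deriv φ) :=
    (contDiff_infty_iff_deriv.mp hphiT).2
  have hone : (1 : WithTop ℕ∞) ≤ ((⊤ : ℕ∞) : WithTop ℕ∞) := by exact_mod_cast le_top
  have hφ' : Continuous (deriv φ) := hphiT.continuous_deriv hone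
  have hφ'' : Continuous (deriv (deriv φ)) := hφder.continuous_deriv hone
  have hdφ : ∀ y, HasDerivAt φ (deriv φ y) y :=
    fun y => ((hphiT.differentiable (by simp)) y).hasDerivAt
  have hd2 : ∀ y, HasDerivAt (deriv φ) (deriv (deriv φ) y) y :=
    fun y => ((hφder.differentiable (by simp)) y).hasDerivAt
  have hQint : ∀ K : Set ℝ, IsCompact K →
      ∀ i j, IntegrableOn (fun t => Q t i j) K volume :=
    fun K hK i j => mem_one_of_memtwo hK (hQ i j K hK)
  have hw0 : LocallyIntegrable (fun t => mv m (Q t) (u t) + u1 t) volume := by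
    refine locallyIntegrable_iff.2 fun K hK => ?_
    exact (integrableOn_mv hK (hQint K hK) hu).add (hu1.locallyIntegrable.integrableOn_isCompact hK)
  have hw1 : LocallyIntegrable
      (fun t => mv m (s t - Q t ^ 2) (u t) - mv m (Q t) (u1 t) - f t) volume := by
    refine locallyIntegrable_iff.2 fun K hK => ?_
    have hsq : ∀ i j, IntegrableOn (fun t => (s t - Q t ^ 2) i j) K volume := by
      intro i j
      have h2 : IntegrableOn (fun t => (Q t ^ 2) i j) K volume := by
        have hrw : (fun t => (Q t ^ 2) i j) = fun t => ∑ k, Q t i k * Q t k j := by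
          funext t; rw [pow_two, Matrix.mul_apply]
        rw [hrw]
        refine integrable_finset_sum _ fun k _ => ?_
        have hpqr : (1 : ENNReal) / 1 = 1 / 2 + 1 / 2 := by
          rw [ENNReal.div_add_div_same, one_div_one, one_add_one_eq_two]
          exact (ENNReal.div_self two_ne_zero ENNReal.ofNat_ne_top).symm
        have h3 : MeasureTheory.Integrable
            ((fun t => Q t i k) • fun t => Q t k j) (volume.restrict K) :=
          memLp_one_iff_integrable.mp ((hQ k j K hK).smul (hQ i k K hK))
        exact h3
      have h1 := (hs i j).integrableOn_isCompact hK
      have : (fun t => (s t - Q t ^ 2) i j) = fun t => s t i j - (Q t ^ 2) i j := by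
        funext t; simp [Matrix.sub_apply]
      rw [this]
      exact h1.sub h2
    exact ((integrableOn_mv hK hsq hu).sub
      (integrableOn_mv hK (hQint K hK) hu1)).sub (hf.integrableOn_isCompact hK)
  refine ⟨?_, hφcont.smul hu, (hφ'.smul hu).add (hφcont.smul hu1), ?_, ?_⟩
  · exact ((locallyIntegrable_smul_cont hφcont hf).sub
      ((hφ''.smul hu).locallyIntegrable)).sub
      (locallyIntegrable_smul_cont (continuous_const.mul hφ') hw0)
  · intro a x
    beta_reduce
    have hfun : (fun t => mv m (Q t) (φ t • u t) + (deriv φ t • u t + φ t • u1 t))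
        = fun t => deriv φ t • u t + φ t • (mv m (Q t) (u t) + u1 t) := by
      funext t
      rw [mv_smul, smul_add]
      abel
    rw [hfun]
    exact parts hφcont hφ' hdφ hu hw0 heq1 a x
  · intro a x
    beta_reduce
    have hfun2 : (fun t => mv m (s t - Q t ^ 2) (φ t • u t)
          - mv m (Q t) (deriv φ t • u t + φ t • u1 t)
          - (φ t • f t - deriv (deriv φ) t • u t
            - (2 * deriv φ t) • (mv m (Q t) (u t) + u1 t)))
        = fun t => (deriv (deriv φ) t • u t + deriv φ t • (mv m (Q t) (u t) + u1 t))
          + (deriv φ t • u1 t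
            + φ t • (mv m (s t - Q t ^ 2) (u t) - mv m (Q t) (u1 t) - f t)) := by
      funext t
      rw [mv_smul, mv_addv, mv_smul, mv_smul]
      module
    rw [hfun2]
    have hA : IntervalIntegrable
        (fun t => deriv (deriv φ) t • u t + deriv φ t • (mv m (Q t) (u t) + u1 t))
        volume a x :=
      ((hφ''.smul hu).intervalIntegrable a x).add
        (locInt_intervalIntegrable (locallyIntegrable_smul_cont hφ' hw0) a x)
    have hB : IntervalIntegrable
        (fun t => deriv φ t • u1 t
          + φ t • (mv m (s t - Q t ^ 2) (u t) - mv m (Q t) (u1 t) - f t)) volume a x :=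
      ((hφ'.smul hu1).intervalIntegrable a x).add
        (locInt_intervalIntegrable (locallyIntegrable_smul_cont hφcont hw1) a x)
    rw [intervalIntegral.integral_add hA hB]
    have e1 := parts hφ' hφ'' hd2 hu hw0 heq1 a x
    have e2 := parts hφcont hφ' hdφ hu1 hw1 heq2 a x
    have e1' : ∫ t in a..x, (deriv (deriv φ) t • u t + deriv φ t • (mv m (Q t) (u t) + u1 t))
        = deriv φ x • u x - deriv φ a • u a := by rw [e1]; abel
    have e2' : ∫ t in a..x, (deriv φ t • u1 t
          + φ t • (mv m (s t - Q t ^ 2) (u t) - mv m (Q t) (u1 t) - f t))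
        = φ x • u1 x - φ a • u1 a := by rw [e2]; abel
    rw [e1', e2']
    abel

end KeySection

/-- Product rule with a smooth compactly supported cutoff. -/
theorem stmt11 (m : ℕ) (hm : 1 ≤ m) (Q s : ℝ → Matrix (Fin m) (Fin m) ℂ)
    (hQ : LocL2 m Q) (hs : LocL1 m s)
    (φ : ℝ → ℂ) (hφ : ContDiff ℝ (⊤ : ℕ∞) φ) (hφc : HasCompactSupport φ) :
    (∀ u u1 f : ℝ → Em m, IsLpair m Q s u u1 f →
      IsLpair m Q s (fun x => φ x • u x)
        (fun x => deriv φ x • u x + φ x • u1 x)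
        (fun x => φ x • f x - deriv (deriv φ) x • u x -
          (2 * deriv φ x) • (mv m (Q x) (u x) + u1 x)) ∧
      HasCompactSupport (fun x => φ x • u x)) ∧
    (∀ v v1 g : ℝ → Em m, IsLplusPair m Q s v v1 g →
      IsLplusPair m Q s (fun x => φ x • v x)
        (fun x => deriv φ x • v x + φ x • v1 x)
        (fun x => φ x • g x - deriv (deriv φ) x • v x -
          (2 * deriv φ x) • (mv m (Q x)ᴴ (v x) + v1 x)) ∧
      HasCompactSupport (fun x => φ x • v x)) := by
  constructor
  · intro u u1 f hp
    exact ⟨key_lpair m Q s hQ hs φ hφ u u1 f hp, hφc.smul_right⟩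
  · intro v v1 g hp
    have hQ' : LocL2 m (fun t => (Q t)ᴴ) := by
      intro i j K hK
      have h := hQ j i K hK
      refine MemLp.of_le h ((continuous_star.comp_aestronglyMeasurable h.1)) ?_
      exact Filter.Eventually.of_forall fun t => by
        simp [Matrix.conjTranspose_apply]
    have hs' : LocL1 m (fun t => (s t)ᴴ) := by
      intro i j
      refine MeasureTheory.locallyIntegrable_iff.2 fun K hK => ?_
      have h := (hs j i).integrableOn_isCompact hK
      refine h.norm.mono' (continuous_star.comp_aestronglyMeasurable h.aestronglyMeasurable) ?_
      exact Filter.Eventually.of_forall fun t => by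
        simp [Matrix.conjTranspose_apply]
    exact ⟨key_lpair m (fun t => (Q t)ᴴ) (fun t => (s t)ᴴ) hQ' hs' φ hφ v v1 g hp,
      hφc.smul_right⟩
end
end
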